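/- Let g ≥ 1, η ∈ (0, 1], and δ ∈ (0, π/2). Let w₁, …, w_g be mutually independent random unit vectors in ℂ^g such that for every index i and every hyperplane V ⊂ ℂ^g (a linear subspace of dimension g − 1), Pr[‖w_i − Π_V w_i‖ ≥ sin δ] ≥ η. Then the probability that w₁, …, w_g are linearly independent (equivalently, span ℂ^g) is at least η^g. -/

import Mathlib

open MeasureTheory ProbabilityTheory

noncomputable instance euclideanComplexMeasurableSpace (g : ℕ) :
    MeasurableSpace (EuclideanSpace ℂ (Fin g)) := borel _

instance euclideanComplexBorelSpace (g : ℕ) :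
    BorelSpace (EuclideanSpace ℂ (Fin g)) := ⟨rfl⟩

/-!
Reveal the vectors one at a time. If `w₁, …, w_k` are linearly independent, their span has
dimension `k < g`, so it lies in a hyperplane `V`; a vector at positive distance from `V` is
outside the span, so `w_{k+1}` extends the independent family with probability at least `η`.
Since `w_{k+1}` is independent of `(w₁, …, w_k)`, Fubini multiplies these conditional bounds,
giving `η^g`.
-/

open scoped ENNReal

lemma Submodule.exists_le_finrank_add_one_eq_of_lt_top {K V : Type*} [Field K] [AddCommGroup V]
    [Module K V] [FiniteDimensional K V] {W : Submodule K V} (hW : W < ⊤) :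
    ∃ H : Submodule K V, W ≤ H ∧ Module.finrank K H + 1 = Module.finrank K V := by
  obtain ⟨f, hf, hWf⟩ := W.exists_le_ker_of_lt_top hW
  exact ⟨LinearMap.ker f, hWf, Module.Dual.finrank_ker_add_one_of_ne_zero hf⟩

lemma Submodule.notMem_of_norm_sub_orthogonalProjectionOnto_pos {𝕜 E : Type*} [RCLike 𝕜]
    [NormedAddCommGroup E] [InnerProductSpace 𝕜 E] {K : Submodule 𝕜 E} [K.HasOrthogonalProjection]
    {y : E} (hy : 0 < ‖y - (K.orthogonalProjectionOnto y : E)‖) : y ∉ K := by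
  intro hyK
  simp [K.orthogonalProjectionOnto_mem_subspace_eq_self ⟨y, hyK⟩] at hy

namespace ProbabilityTheory

variable {Ω α β : Type*} [MeasurableSpace Ω] {P : Measure Ω}
  [MeasurableSpace α] [MeasurableSpace β]

lemma IndepFun.mul_measure_le_measure_of_forall_mem_le [IsFiniteMeasure P]
    {X : Ω → α} {Y : Ω → β} (hXY : IndepFun X Y P) (hX : Measurable X) (hY : Measurable Y)
    {A : Set (α × β)} (hA : MeasurableSet A) {B : Set α} (hB : MeasurableSet B) {c : ℝ≥0∞}
    (hc : ∀ x ∈ B, c ≤ P {ω | (x, Y ω) ∈ A}) :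
    c * P (X ⁻¹' B) ≤ P {ω | (X ω, Y ω) ∈ A} := by
  have hsection (x : α) : P.map Y (Prod.mk x ⁻¹' A) = P {ω | (x, Y ω) ∈ A} :=
    Measure.map_apply hY (measurable_prodMk_left hA)
  calc c * P (X ⁻¹' B) = ∫⁻ x, B.indicator (fun _ ↦ c) x ∂P.map X := by
        rw [lintegral_indicator_const hB, Measure.map_apply hX hB]
    _ ≤ ∫⁻ x, P.map Y (Prod.mk x ⁻¹' A) ∂P.map X := by
        refine lintegral_mono fun x ↦ ?_
        by_cases hx : x ∈ B
        · simpa [hx, hsection] using hc x hx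
        · simp [hx]
    _ = (P.map X).prod (P.map Y) A := (Measure.prod_apply hA).symm
    _ = P {ω | (X ω, Y ω) ∈ A} := by
        rw [← hXY.map_prod_eq_prod_map_map hX.aemeasurable hY.aemeasurable,
          Measure.map_apply (hX.prodMk hY) hA]
        rfl

lemma iIndepFun.indepFun_init_last {n : ℕ} {f : Fin (n + 1) → Ω → β} (hf : iIndepFun f P)
    (hmeas : ∀ i, Measurable (f i)) :
    IndepFun (fun ω i ↦ f (Fin.castSucc i) ω) (f (Fin.last n)) P := by
  have hdisj : Disjoint ({Fin.last n}ᶜ : Finset (Fin (n + 1))) {Fin.last n} :=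
    disjoint_compl_left
  have hφ : Measurable fun (x : ({Fin.last n}ᶜ : Finset (Fin (n + 1))) → β) (i : Fin n) ↦
      x ⟨Fin.castSucc i, by simp [(Fin.castSucc_lt_last i).ne]⟩ :=
    measurable_pi_lambda _ fun i ↦ measurable_pi_apply _
  exact (hf.indepFun_finset _ _ hdisj hmeas).comp hφ
    (measurable_pi_apply ⟨Fin.last n, Finset.mem_singleton_self _⟩)

theorem iIndepFun.pow_le_measure_linearIndependent {𝕜 E : Type*} [NontriviallyNormedField 𝕜]
    [CompleteSpace 𝕜] [NormedAddCommGroup E] [NormedSpace 𝕜 E] [MeasurableSpace E] [BorelSpace E]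
    [SecondCountableTopology E] [IsProbabilityMeasure P] {n : ℕ}
    {w : Fin n → Ω → E} (hindep : iIndepFun w P) (hmeas : ∀ i, Measurable (w i)) {c : ℝ≥0∞}
    (hc : ∀ i (W : Submodule 𝕜 E), Module.finrank 𝕜 W < n → c ≤ P {ω | w i ω ∉ W}) :
    c ^ n ≤ P {ω | LinearIndependent 𝕜 fun i ↦ w i ω} := by
  induction n with
  | zero => simp
  | succ n ih =>
    set A := {p : (Fin n → E) × E | LinearIndependent 𝕜 (Fin.snoc p.1 p.2 : Fin (n + 1) → E)}
    set B := {x : Fin n → E | LinearIndependent 𝕜 x}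
    have hA : MeasurableSet A := (isOpen_setOfPred_linearIndependent.preimage
      (continuous_fst.finSnoc continuous_snd)).measurableSet
    have hB : MeasurableSet B := isOpen_setOfPred_linearIndependent.measurableSet
    have hinit : Measurable fun ω i ↦ w (Fin.castSucc i) ω :=
      measurable_pi_lambda _ fun i ↦ hmeas _
    have hsection (x : Fin n → E) (hx : x ∈ B) : c ≤ P {ω | (x, w (Fin.last n) ω) ∈ A} := by
      refine (hc (Fin.last n) (Submodule.span 𝕜 (Set.range x)) ?_).trans
        (measure_mono fun ω hω ↦ linearIndependent_finSnoc.mpr ⟨hx, hω⟩)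
      simp [finrank_span_eq_card hx]
    calc c ^ (n + 1) = c * c ^ n := pow_succ' c n
      _ ≤ c * P {ω | LinearIndependent 𝕜 fun i ↦ w (Fin.castSucc i) ω} := by
          gcongr
          exact ih (hindep.precomp (Fin.castSucc_injective n)) (fun i ↦ hmeas _)
            fun i W hW ↦ hc _ W (by omega)
      _ ≤ P {ω | (fun i ↦ w (Fin.castSucc i) ω, w (Fin.last n) ω) ∈ A} :=
          (hindep.indepFun_init_last hmeas).mul_measure_le_measure_of_forall_mem_le hinit
            (hmeas _) hA hB hsection
      _ = P {ω | LinearIndependent 𝕜 fun i ↦ w i ω} := by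
          congr! with ω
          change LinearIndependent 𝕜 (Fin.snoc (Fin.init fun i ↦ w i ω) _) ↔ _
          rw [Fin.snoc_init_self]

end ProbabilityTheory

theorem prob_linearIndependent_of_anti_concentration_general
    {Ω : Type*} [MeasurableSpace Ω] (P : Measure Ω) [IsProbabilityMeasure P]
    {g : ℕ} (η δ : ℝ)
    (hδ : δ ∈ Set.Ioo 0 (Real.pi / 2))
    (w : Fin g → Ω → EuclideanSpace ℂ (Fin g))
    (hmeas : ∀ i, Measurable (w i))
    (hindep : iIndepFun w P)
    (hanti : ∀ (i : Fin g) (V : Submodule ℂ (EuclideanSpace ℂ (Fin g))),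
      Module.finrank ℂ V = g - 1 →
      ENNReal.ofReal η ≤ P {ω | Real.sin δ ≤
        ‖w i ω - (V.orthogonalProjectionOnto (w i ω) : EuclideanSpace ℂ (Fin g))‖}) :
    ENNReal.ofReal η ^ g ≤ P {ω | LinearIndependent ℂ fun i => w i ω} := by
  have hsin : 0 < Real.sin δ :=
    Real.sin_pos_of_pos_of_lt_pi hδ.1 (by linarith [hδ.2, Real.pi_pos])
  refine hindep.pow_le_measure_linearIndependent hmeas fun i W hW ↦ ?_
  obtain ⟨V, hWV, hV⟩ := W.exists_le_finrank_add_one_eq_of_lt_top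
    (Submodule.lt_top_of_finrank_lt_finrank (by simpa using hW))
  have hVrank : Module.finrank ℂ V = g - 1 := by rw [finrank_euclideanSpace_fin] at hV; omega
  refine (hanti i V hVrank).trans (measure_mono fun ω hω hwW ↦ ?_)
  exact Submodule.notMem_of_norm_sub_orthogonalProjectionOnto_pos (hsin.trans_le hω) (hWV hwW)

/-- **Diversity under anti-concentration.**
Let `w₁, …, w_g` be mutually independent random unit vectors in `ℂ^g` such that each
one escapes every hyperplane `V ⊂ ℂ^g` by Fubini–Study distance `δ` (i.e. the orthogonal
residual `‖w - Π_V w‖` is at least `sin δ`) with probability at least `η`.  Then the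
`w_i` are linearly independent (equivalently, span `ℂ^g`) with probability at least `η^g`. -/
theorem prob_linearIndependent_of_anti_concentration
    {Ω : Type*} [MeasurableSpace Ω] (P : Measure Ω) [IsProbabilityMeasure P]
    {g : ℕ} (hg : 1 ≤ g) (η δ : ℝ) (hη : η ∈ Set.Ioc (0 : ℝ) 1)
    (hδ : δ ∈ Set.Ioo 0 (Real.pi / 2))
    (w : Fin g → Ω → EuclideanSpace ℂ (Fin g))
    (hunit : ∀ i ω, ‖w i ω‖ = 1)
    (hmeas : ∀ i, Measurable (w i))
    (hindep : iIndepFun w P)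
    (hanti : ∀ (i : Fin g) (V : Submodule ℂ (EuclideanSpace ℂ (Fin g))),
      Module.finrank ℂ V = g - 1 →
      ENNReal.ofReal η ≤ P {ω | Real.sin δ ≤
        ‖w i ω - (V.orthogonalProjectionOnto (w i ω) : EuclideanSpace ℂ (Fin g))‖}) :
    ENNReal.ofReal η ^ g ≤ P {ω | LinearIndependent ℂ fun i => w i ω} :=
  prob_linearIndependent_of_anti_concentration_general P η δ hδ w hmeas hindep hanti
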